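/- arXiv:1408.1334 — 4 statements merged into one kernel-verified Lean document; each statement's English description precedes it below -/
import Mathlib

section
/- Let ζ be an n-th root of unity, t ≥ 1, ν ≥ 0, and N ≥ (ν+1)n − 1. Then (q d/dq)^ν F(q;N) evaluated at q = ζ equals (q d/dq)^ν F(q;(ν+1)n−1) evaluated at q = ζ. -/
open Polynomial

/-- `(q)_k` over `ℂ`. -/
noncomputable def qPochC (k : ℕ) : Polynomial ℂ := ∏ j ∈ Finset.range k, (1 - X ^ (j + 1))

/-- `F(q;N) = ∑_{k=0}^N (q)_k` over `ℂ`. -/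
noncomputable def FKZC (N : ℕ) : Polynomial ℂ := ∑ k ∈ Finset.range (N + 1), qPochC k

/-- The Euler operator `q d/dq` on polynomials. -/
noncomputable def euler (p : Polynomial ℂ) : Polynomial ℂ := X * derivative p

/-!
For `k ≥ (ν+1)n` the factors `1 - q^n, 1 - q^{2n}, …, 1 - q^{(ν+1)n}` of `(q)_k` are all divisible
by `1 - q^n`, so `(1 - q^n)^{ν+1} ∣ (q)_k`. Each application of `q d/dq` lowers the power of a
divisor by at most one, so after `ν` applications `1 - q^n` still divides, and the terms with
`k ≥ (ν+1)n` vanish at every `n`-th root of unity.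
-/

lemma euler_iterate_add (ν : ℕ) (p q : Polynomial ℂ) :
    euler^[ν] (p + q) = euler^[ν] p + euler^[ν] q :=
  Function.Semiconj₂.iterate (fun p q => by simp only [euler, derivative_add, mul_add]) ν p q

lemma pow_dvd_euler_of_pow_succ_dvd {f p : Polynomial ℂ} {m : ℕ} (h : f ^ (m + 1) ∣ p) :
    f ^ m ∣ euler p := by
  obtain ⟨g, rfl⟩ := h
  have hderiv : derivative (f ^ (m + 1) * g) =
      f ^ m * (C ((m + 1 : ℕ) : ℂ) * derivative f * g + f * derivative g) := by
    rw [derivative_mul, derivative_pow, Nat.add_sub_cancel, pow_succ]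
    ring
  rw [euler, hderiv]
  exact dvd_mul_of_dvd_right (dvd_mul_right _ _) X

lemma dvd_euler_iterate_of_pow_succ_dvd {f p : Polynomial ℂ} {ν : ℕ} (h : f ^ (ν + 1) ∣ p) :
    f ∣ euler^[ν] p := by
  induction ν generalizing p with
  | zero => simpa using h
  | succ m ih => exact ih (pow_dvd_euler_of_pow_succ_dvd h)

lemma qPochC_succ (k : ℕ) : qPochC (k + 1) = qPochC k * (1 - X ^ (k + 1)) :=
  Finset.prod_range_succ _ k

lemma qPochC_dvd_qPochC {k l : ℕ} (h : k ≤ l) : qPochC k ∣ qPochC l :=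
  Finset.prod_dvd_prod_of_subset _ _ _ (Finset.range_subset_range.mpr h)

lemma one_sub_X_pow_pow_dvd_qPochC {n : ℕ} (hn : 0 < n) (m : ℕ) :
    (1 - X ^ n) ^ m ∣ qPochC (m * n) := by
  induction m with
  | zero => simp
  | succ m ih =>
    obtain ⟨k, hk⟩ : ∃ k, (m + 1) * n = k + 1 :=
      Nat.exists_eq_succ_of_ne_zero (Nat.mul_pos m.succ_pos hn).ne'
    have hlast : 1 - X ^ n ∣ (1 - X ^ (k + 1) : Polynomial ℂ) := by
      rw [← hk, mul_comm, pow_mul]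
      exact one_sub_dvd_one_sub_pow _ _
    rw [hk, qPochC_succ, pow_succ]
    exact mul_dvd_mul (ih.trans (qPochC_dvd_qPochC (by nlinarith))) hlast

/-- for an `n`-th root of unity `ζ`, `ν ≥ 0` and `N ≥ (ν+1)n - 1`,
`(q d/dq)^ν F(q;N)` at `q = ζ` equals `(q d/dq)^ν F(q;(ν+1)n-1)` at `q = ζ`. -/
theorem euler_FKZ_eval_stable (n : ℕ) (hn : 0 < n) (ζ : ℂ) (hζ : ζ ^ n = 1)
    (ν N : ℕ) (hN : (ν + 1) * n - 1 ≤ N) :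
    (euler^[ν] (FKZC N)).eval ζ = (euler^[ν] (FKZC ((ν + 1) * n - 1))).eval ζ := by
  have hM : (ν + 1) * n - 1 + 1 = (ν + 1) * n := Nat.sub_add_cancel (Nat.mul_pos ν.succ_pos hn)
  have hsplit : FKZC N = FKZC ((ν + 1) * n - 1) +
      ∑ k ∈ Finset.Ico ((ν + 1) * n) (N + 1), qPochC k := by
    rw [FKZC, FKZC, hM, Finset.sum_range_add_sum_Ico _ (by omega)]
  have htail : (1 - X ^ n) ^ (ν + 1) ∣ ∑ k ∈ Finset.Ico ((ν + 1) * n) (N + 1), qPochC k :=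
    Finset.dvd_sum fun k hk => (one_sub_X_pow_pow_dvd_qPochC hn (ν + 1)).trans
      (qPochC_dvd_qPochC (Finset.mem_Ico.mp hk).1)
  have hroot : (1 - X ^ n : Polynomial ℂ).eval ζ = 0 := by simp [hζ]
  rw [hsplit, euler_iterate_add, eval_add,
    eval_eq_zero_of_dvd_of_eval_eq_zero (dvd_euler_iterate_of_pow_succ_dvd htail) hroot, add_zero]
end

section
/- Let p ≥ 5 be prime and r ≥ 2. Let S(p) be the set of residues mod p of pentagonal numbers (m²−1)/24 with gcd(m,6)=1, and similarly S(p^r) mod p^r. If n ∈ S(p) and n ≢ −1/24 (mod p) (where 1/24 is the inverse of 24 mod p), then n + pk ∈ S(p^r) for all 0 ≤ k < p^{r-1}. -/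
/-- `i` is congruent modulo `t` to a pentagonal number `(m²-1)/24` with `gcd(m,6)=1`. -/
def PentRes (t i : ℕ) : Prop :=
  ∃ m x : ℤ, Int.gcd m 6 = 1 ∧ 24 * x = m ^ 2 - 1 ∧ (x : ZMod t) = (i : ZMod t)

/-!
Since `24 x = m² - 1`, the residue `i` is pentagonal modulo `t` exactly when `24 i + 1` is a
square modulo `t` (for `t` prime to `6`, the root can be moved into the class `1 mod 6` by the
Chinese remainder theorem). The hypothesis `n ≢ -1/24` says that `24 n + 1` is a unit modulo `p`,
so a square root of `24 (n + p k) + 1 ≡ 24 n + 1` modulo `p` lifts to one modulo `p ^ r` by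
Hensel's lemma.
-/

section Hensel

variable {R : Type*} [CommRing R] {p c m : R}

theorem IsCoprime.two_mul_of_dvd_sq_sub (hc : IsCoprime (2 * c) p) (hm : p ∣ m ^ 2 - c) :
    IsCoprime (2 * m) p := by
  obtain ⟨q, hq⟩ := hm
  have : IsCoprime (2 * m * m + p * -(2 * q)) p := by
    convert hc using 2
    linear_combination 2 * hq
  exact (IsCoprime.add_mul_left_left_iff.mp this).of_mul_left_left

theorem exists_sq_sub_dvd_pow_succ_succ {s : ℕ} (hm : IsCoprime (2 * m) p)
    (h : p ^ (s + 1) ∣ m ^ 2 - c) : ∃ t, p ^ (s + 2) ∣ (m + p ^ (s + 1) * t) ^ 2 - c := by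
  obtain ⟨d, hd⟩ := h
  obtain ⟨u, v, huv⟩ := hm
  -- `u` inverts `2 m` modulo `p`, so `t = -d u` cancels the linear term `2 m p ^ (s + 1) t`.
  refine ⟨-(d * u), d * v + p ^ s * (d * u) ^ 2, ?_⟩
  linear_combination hd - p ^ (s + 1) * d * huv

theorem exists_sq_sub_dvd_pow (hc : IsCoprime (2 * c) p) (hm : p ∣ m ^ 2 - c) (s : ℕ) :
    ∃ m', p ^ s ∣ m' ^ 2 - c := by
  suffices h : ∀ s : ℕ, ∃ m', IsCoprime (2 * m') p ∧ p ^ (s + 1) ∣ m' ^ 2 - c by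
    obtain ⟨m', -, hm'⟩ := h s
    exact ⟨m', (pow_dvd_pow p s.le_succ).trans hm'⟩
  intro s
  induction s with
  | zero => exact ⟨m, hc.two_mul_of_dvd_sq_sub hm, by simpa using hm⟩
  | succ s ih =>
    obtain ⟨m', hcop, hdvd⟩ := ih
    obtain ⟨t, ht⟩ := exists_sq_sub_dvd_pow_succ_succ hcop hdvd
    refine ⟨m' + p ^ (s + 1) * t, ?_, ht⟩
    simpa [mul_add, pow_succ, mul_assoc, mul_left_comm] using
      hcop.add_mul_left_left (2 * (p ^ s * t))

end Hensel

theorem IsCoprime.exists_dvd_sub_and_dvd_sub {R : Type*} [CommRing R] {a b : R}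
    (h : IsCoprime a b) (x y : R) : ∃ z, a ∣ z - x ∧ b ∣ z - y := by
  obtain ⟨u, v, huv⟩ := h
  refine ⟨x * (v * b) + y * (u * a), ⟨u * (y - x), ?_⟩, ⟨v * (x - y), ?_⟩⟩
  · linear_combination x * huv
  · linear_combination y * huv

theorem Int.dvd_sq_sub_one_of_dvd_sub_one {M : ℤ} (h : 6 ∣ M - 1) : 24 ∣ M ^ 2 - 1 := by
  obtain ⟨v, hv⟩ := h
  obtain ⟨a, ha⟩ := Int.even_mul_succ_self v
  exact ⟨a + v ^ 2, by linear_combination (M + 1 + 6 * v) * hv + 12 * ha⟩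

theorem PentRes.exists_dvd_sq_sub {t i : ℕ} (h : PentRes t i) :
    ∃ m : ℤ, (t : ℤ) ∣ m ^ 2 - (24 * i + 1) := by
  obtain ⟨m, x, -, hx, hxi⟩ := h
  rw [← Int.cast_natCast, ZMod.intCast_eq_intCast_iff_dvd_sub] at hxi
  obtain ⟨q, hq⟩ := hxi
  exact ⟨m, -(24 * q), by linear_combination -hx - 24 * hq⟩

theorem pentRes_of_dvd_sq_sub {t i : ℕ} (ht : IsCoprime (t : ℤ) 24) {m : ℤ}
    (hm : (t : ℤ) ∣ m ^ 2 - (24 * i + 1)) : PentRes t i := by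
  obtain ⟨M, hMm, hM1⟩ :=
    (ht.of_isCoprime_of_dvd_right (by norm_num : (6 : ℤ) ∣ 24)).exists_dvd_sub_and_dvd_sub m 1
  obtain ⟨x, hx⟩ := Int.dvd_sq_sub_one_of_dvd_sub_one hM1
  refine ⟨M, x, ?_, hx.symm, ?_⟩
  · obtain ⟨v, hv⟩ := hM1
    exact Int.isCoprime_iff_gcd_eq_one.mp ⟨1, -v, by linear_combination hv⟩
  · obtain ⟨a, ha⟩ := hMm
    obtain ⟨b, hb⟩ := hm
    have h24 : (t : ℤ) ∣ 24 * (i - x) :=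
      ⟨-(a * (M + m)) - b, by linear_combination hx - (M + m) * ha - hb⟩
    rw [← Int.cast_natCast, ZMod.intCast_eq_intCast_iff_dvd_sub]
    exact ht.dvd_of_dvd_mul_left h24

theorem Nat.Prime.isCoprime_twentyFour_of_five_le {p : ℕ} (hp : p.Prime) (hp5 : 5 ≤ p) :
    IsCoprime (p : ℤ) 24 := by
  rw [show (24 : ℤ) = ((24 : ℕ) : ℤ) by rfl, Nat.isCoprime_iff_coprime,
    hp.coprime_iff_not_dvd]
  intro h
  have := Nat.le_of_dvd (by norm_num) h
  interval_cases p <;> first | omega | norm_num at hp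

theorem pentRes_lifts_general (p r : ℕ) (hp : p.Prime) (hp5 : 5 ≤ p)
    (n : ℕ) (hpent : PentRes p n)
    (hne : (24 * n + 1 : ZMod p) ≠ 0) :
    ∀ k < p ^ (r - 1), PentRes (p ^ r) (n + p * k) := by
  intro k _
  have h24 := hp.isCoprime_twentyFour_of_five_le hp5
  obtain ⟨m, hm⟩ := hpent.exists_dvd_sq_sub
  have hshift :
      24 * ((n + p * k : ℕ) : ℤ) + 1 = ((24 * n + 1 : ℕ) : ℤ) + p * (24 * k) := by
    push_cast; ring
  have hmk : (p : ℤ) ∣ m ^ 2 - (24 * ((n + p * k : ℕ) : ℤ) + 1) := by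
    rw [hshift, sub_add_eq_sub_sub]
    have hm' : (p : ℤ) ∣ m ^ 2 - ((24 * n + 1 : ℕ) : ℤ) := by exact_mod_cast hm
    exact hm'.sub (dvd_mul_right _ _)
  have hunit : IsCoprime ((24 * n + 1 : ℕ) : ℤ) p := by
    have := Fact.mk hp
    rw [Nat.isCoprime_iff_coprime, ← ZMod.isUnit_iff_coprime, isUnit_iff_ne_zero]
    exact_mod_cast hne
  have hc : IsCoprime (2 * (24 * ((n + p * k : ℕ) : ℤ) + 1)) p := by
    rw [hshift]
    exact (h24.symm.of_isCoprime_of_dvd_left (by norm_num)).mul_left (hunit.add_mul_left_left _)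
  obtain ⟨M, hM⟩ := exists_sq_sub_dvd_pow hc hmk r
  exact pentRes_of_dvd_sq_sub (by exact_mod_cast h24.pow_left) hM

/-- for `p ≥ 5` prime and `r ≥ 2`, a pentagonal residue `n` mod `p` with
`n ≢ -1/24 (mod p)` lifts to `n + pk ∈ S(p^r)` for all `0 ≤ k < p^{r-1}`. -/
theorem pentRes_lifts (p r : ℕ) (hp : p.Prime) (hp5 : 5 ≤ p) (hr : 2 ≤ r)
    (n : ℕ) (hn : n < p) (hpent : PentRes p n)
    (hne : (24 * n + 1 : ZMod p) ≠ 0) :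
    ∀ k < p ^ (r - 1), PentRes (p ^ r) (n + p * k) :=
  pentRes_lifts_general p r hp hp5 n hpent hne
end

section
/- Let p ≥ 5 be prime and r ≥ 2. If n ∈ {0,...,p-1} satisfies n ≡ −1/24 (mod p), then n + p^r − p is not in S(p^r), the set of residues of pentagonal numbers (m²−1)/24 (gcd(m,6)=1) modulo p^r. -/
/-!
If `m² ≡ 24(n + p^r - p) + 1 (mod p^r)`, then modulo `p²` we get `m² ≡ y := 24n + 1 - 24p`.
As `p ∣ 24n + 1`, also `p ∣ y`, hence `p ∣ m` and so `p² ∣ y`. But `-24p < y < 0`. Since `p`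
divides `24n + 1`, it is prime to `24`, so `p² ≡ 1 ≡ y (mod 24)`; the quotient `y / p²` is then
a negative number `≡ 1 (mod 24)`, so `y ≤ -23p² < -24p`.
-/

theorem PentRes.exists_sq_modEq {t i : ℕ} (h : PentRes t i) :
    ∃ m : ℤ, m ^ 2 ≡ 24 * i + 1 [ZMOD t] := by
  obtain ⟨m, x, -, hmx, hx⟩ := h
  have hxi : x ≡ i [ZMOD t] := (ZMod.intCast_eq_intCast_iff _ _ _).mp (by exact_mod_cast hx)
  have hm : m ^ 2 = 24 * x + 1 := by linarith
  exact ⟨m, hm ▸ (hxi.mul_left 24).add_right 1⟩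

theorem Prime.sq_dvd_of_dvd_of_sq_dvd_sub_sq {R : Type*} [CommRing R] {p m y : R}
    (hp : Prime p) (hy : p ∣ y) (h : p ^ 2 ∣ y - m ^ 2) : p ^ 2 ∣ y := by
  have hm : p ∣ m := hp.dvd_of_dvd_pow (n := 2) <| by
    simpa using dvd_sub hy ((dvd_pow_self p two_ne_zero).trans h)
  simpa using dvd_add h (pow_dvd_pow_of_dvd hm 2)

theorem Nat.Coprime.sq_modEq_one_twentyFour {a : ℕ} (ha : a.Coprime 24) :
    (a : ℤ) ^ 2 ≡ 1 [ZMOD 24] := by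
  have hunits : ∀ u : (ZMod 24)ˣ, (u : ZMod 24) ^ 2 = 1 := by decide
  rw [← Nat.cast_ofNat, ← ZMod.intCast_eq_intCast_iff]
  simpa using hunits (ZMod.unitOfCoprime a ha)

theorem le_neg_mul_of_sq_dvd_of_modEq_one {q y : ℤ} (hq : q ^ 2 ≡ 1 [ZMOD 24])
    (hy : y ≡ 1 [ZMOD 24]) (hneg : y < 0) (hdvd : q ^ 2 ∣ y) : y ≤ -23 * q ^ 2 := by
  obtain ⟨c, rfl⟩ := hdvd
  have hc : c ≡ 1 [ZMOD 24] := by simpa using (hq.mul_right c).symm.trans hy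
  have hc_neg : c < 0 := by nlinarith [sq_nonneg q]
  have : c ≤ -23 := by rw [Int.ModEq] at hc; omega
  nlinarith [sq_nonneg q]

theorem pentRes_exceptional_not_lift_general (p r : ℕ) (hp : p.Prime) (hr : 2 ≤ r)
    (n : ℕ) (hn : n < p) (hcong : (24 * n + 1 : ZMod p) = 0) :
    ¬ PentRes (p ^ r) (n + p ^ r - p) := by
  intro hres
  obtain ⟨m, hm⟩ := hres.exists_sq_modEq
  set y : ℤ := 24 * n + 1 - 24 * p
  have hpA : p ∣ 24 * n + 1 := (ZMod.natCast_eq_zero_iff _ _).mp (by exact_mod_cast hcong)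
  have hpy : (p : ℤ) ∣ y := dvd_sub (by exact_mod_cast hpA) (dvd_mul_left _ _)
  have hmy : m ^ 2 ≡ y [ZMOD (p : ℤ) ^ 2] := by
    have hcast : ((n + p ^ r - p : ℕ) : ℤ) = n + (p : ℤ) ^ r - p := by
      have : p ≤ p ^ r := Nat.le_self_pow (by omega) p
      push_cast [show p ≤ n + p ^ r by omega]; ring
    refine (hm.of_dvd (by exact_mod_cast pow_dvd_pow p hr)).trans ?_
    rw [hcast, Int.modEq_iff_dvd]
    have hpow : (p : ℤ) ^ r = p ^ 2 * p ^ (r - 2) := by rw [← pow_add, Nat.add_sub_cancel' hr]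
    exact ⟨-24 * (p : ℤ) ^ (r - 2), by rw [hpow]; ring⟩
  have hp2y : (p : ℤ) ^ 2 ∣ y :=
    (Nat.prime_iff_prime_int.mp hp).sq_dvd_of_dvd_of_sq_dvd_sub_sq hpy hmy.dvd
  have hcop : p.Coprime 24 := Nat.Coprime.coprime_dvd_left hpA (by simp)
  have hy_le := le_neg_mul_of_sq_dvd_of_modEq_one hcop.sq_modEq_one_twentyFour
    (Int.modEq_iff_dvd.mpr ⟨p - n, by ring⟩) (by omega) hp2y
  nlinarith [hp.two_le]

/-- for `p ≥ 5` prime and `r ≥ 2`, if `n ≡ -1/24 (mod p)` with `n < p`, then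
`n + p^r - p` is not a pentagonal residue mod `p^r`. -/
theorem pentRes_exceptional_not_lift (p r : ℕ) (hp : p.Prime) (hp5 : 5 ≤ p) (hr : 2 ≤ r)
    (n : ℕ) (hn : n < p) (hcong : (24 * n + 1 : ZMod p) = 0) :
    ¬ PentRes (p ^ r) (n + p ^ r - p) :=
  pentRes_exceptional_not_lift_general p r hp hr n hn hcong
end

section
/- (Kummer-type lemma) Let p be prime and r ≥ 1. Suppose m has base-p expansion m = m₀ + (p−1)p + (p−1)p² + ... + (p−1)p^{r−1} + (higher terms), and let i be a nonnegative integer whose units digit (base p) is less than m₀. Then for any k ≥ 0 the addition producing C(i + kp^r, m) incurs at least r carries in base p, hence p^r divides C(i + kp^r, m). -/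
/-- Auxiliary: `n % p^(s+1) = p^s * (n / p^s % p) + n % p^s`. -/
lemma mod_pow_succ_aux (p s n : ℕ) :
    n % p ^ (s + 1) = p ^ s * (n / p ^ s % p) + n % p ^ s := by
  conv_lhs => rw [← Nat.div_add_mod (n % p ^ (s + 1)) (p ^ s)]
  rw [pow_succ]
  rw [Nat.mod_mul_right_div_self, Nat.mod_mod_of_dvd _ (dvd_mul_right _ _)]

/-- Kummer-type lemma: if the base-`p` digits of `m` in positions
`1,…,r-1` all equal `p-1` and the units digit of `i` is strictly less than the units
digit `m₀` of `m`, then `p^r` divides `C(i + k·p^r, m)` for every `k ≥ 0`. -/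
theorem kummer_carry_divisibility (p r : ℕ) (hp : p.Prime) (hr : 1 ≤ r)
    (m i : ℕ)
    (hdig : ∀ s, 1 ≤ s → s < r → (m / p ^ s) % p = p - 1)
    (hunit : i % p < m % p) :
    ∀ k : ℕ, p ^ r ∣ Nat.choose (i + k * p ^ r) m := by
  have hp0 : 0 < p := hp.pos
  -- key digit computation: for 1 ≤ s ≤ r, m % p^s = m % p + (p^s - p)
  have hmod : ∀ s, 1 ≤ s → s ≤ r → m % p ^ s = m % p + (p ^ s - p) := by
    intro s hs1 hsr
    induction s with
    | zero => omega
    | succ t ih =>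
      rcases Nat.eq_or_lt_of_le hs1 with h1 | h1
      · simp [← h1]
      · have ht1 : 1 ≤ t := by omega
        have := ih ht1 (by omega)
        rw [mod_pow_succ_aux, hdig t ht1 (by omega), this]
        have hpt : p ≤ p ^ t := Nat.le_self_pow (by omega) p
        have hps : p ^ t ≤ p ^ (t + 1) := Nat.pow_le_pow_right hp0 (by omega)
        have hmul : p ^ t * (p - 1) = p ^ (t + 1) - p ^ t := by
          rw [Nat.mul_sub, (by ring : p ^ (t + 1) = p * p ^ t)]; ring_nf
        omega
  intro k
  set n := i + k * p ^ r with hn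
  by_cases hmn : m ≤ n
  · -- n ≡ i (mod p)
    have hnp : n % p = i % p := by
      have hdvd : p ∣ k * p ^ r := Dvd.dvd.mul_left (dvd_pow_self p (by omega)) k
      obtain ⟨c, hc⟩ := hdvd
      simp [hn, hc, Nat.add_mul_mod_self_left]
    set d := n - m with hd
    -- carry at position 0: d % p + m % p ≥ p
    have key : p ≤ d % p + m % p := by
      by_contra h
      push_neg at h
      have hnd : n = d + m := by omega
      have : n % p = d % p + m % p := by
        rw [hnd, Nat.add_mod, Nat.mod_eq_of_lt h]
      have hmp : m % p < p := Nat.mod_lt _ hp0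
      omega
    -- carry at every position s, 1 ≤ s ≤ r
    have carry : ∀ s, 1 ≤ s → s ≤ r → p ^ s ≤ m % p ^ s + d % p ^ s := by
      intro s hs1 hsr
      have h1 : m % p ^ s = m % p + (p ^ s - p) := hmod s hs1 hsr
      have h2 : d % p ≤ d % p ^ s := by
        have := Nat.mod_mod_of_dvd d (dvd_pow_self p (by omega : s ≠ 0))
        have := Nat.mod_le (d % p ^ s) p
        omega
      have hpt : p ≤ p ^ s := Nat.le_self_pow (by omega) p
      omega
    -- apply Kummer's theorem
    set b := max (r + 1) (Nat.log p n + 1) with hb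
    have hnb : Nat.log p n < b := by omega
    have hkummer := Nat.Prime.emultiplicity_choose hp hmn hnb
    have hsubset : Finset.Ico 1 (r + 1) ⊆
        {j ∈ Finset.Ico 1 b | p ^ j ≤ m % p ^ j + (n - m) % p ^ j} := by
      intro s hs
      simp only [Finset.mem_Ico, Finset.mem_filter] at hs ⊢
      exact ⟨⟨hs.1, by omega⟩, carry s hs.1 (by omega)⟩
    have hcard : r ≤ {j ∈ Finset.Ico 1 b |
        p ^ j ≤ m % p ^ j + (n - m) % p ^ j}.card := by
      have := Finset.card_le_card hsubset
      simpa using this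
    refine pow_dvd_of_le_emultiplicity ?_
    rw [hkummer]
    exact_mod_cast Nat.cast_le.mpr hcard
  · rw [Nat.choose_eq_zero_of_lt (by omega)]
    exact dvd_zero _
end
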